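/- There is no morphism f on finite words over {1,2,3} with f(w) = w (w the Arshon sequence), |f(1)| + |f(2)| + |f(3)| > 3, and |f(1)| = 5. -/

import Mathlib

open List Filter

/-- Image of a letter in an odd (1-based) position under ψ. -/
def oddBlock : ℕ → List ℕ
  | 1 => [1, 2, 3]
  | 2 => [2, 3, 1]
  | 3 => [3, 1, 2]
  | _ => []

/-- Image of a letter in an even (1-based) position under ψ. -/
def evenBlock : ℕ → List ℕ
  | 1 => [3, 2, 1]
  | 2 => [1, 3, 2]
  | 3 => [2, 1, 3]
  | _ => []

/-- The Arshon map ψ: replace the letter at each odd (1-based) position by its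
`oddBlock`, and the letter at each even position by its `evenBlock`. -/
def psi (l : List ℕ) : List ℕ :=
  (((List.range l.length).zip l).map fun p => if p.1 % 2 = 0 then oddBlock p.2 else evenBlock p.2).flatten

/-- The Arshon sequence `w = lim ψ^k(1)` as an infinite word: since
`|ψ^[n+1] [1]| = 3^(n+1) > n`, the `n`-th letter (0-based) is well defined. -/
def arshon (n : ℕ) : ℕ := (psi^[n + 1] [1]).getD n 0

/-- A word over the alphabet {1,2,3}. -/
def Word123 (l : List ℕ) : Prop := ∀ a ∈ l, a = 1 ∨ a = 2 ∨ a = 3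

/-- A morphism on finite words over {1,2,3}. -/
def IsMorphism123 (f : List ℕ → List ℕ) : Prop :=
  (∀ u v, f (u ++ v) = f u ++ f v) ∧ ∀ l, Word123 l → Word123 (f l)

/-- `f(w) = w` where `w` is the infinite Arshon word: the image of every finite
prefix of `w` is again a prefix of `w`, and these images have unbounded length
(so that `f(w)` is genuinely the infinite word `w`). -/
def FixesArshon (f : List ℕ → List ℕ) : Prop :=
  (∀ n, f ((List.range n).map arshon)
      = (List.range (f ((List.range n).map arshon)).length).map arshon) ∧
  Tendsto (fun n => (f ((List.range n).map arshon)).length) atTop atTop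

/-- The infinite word `s` is obtained by iterating the morphism `f` on the
letter 1: `f(1)` begins with 1, `|f^k(1)| → ∞`, and `s = lim f^k(1)`. -/
def IterLimit (f : List ℕ → List ℕ) (s : ℕ → ℕ) : Prop :=
  (∃ t, f [1] = 1 :: t) ∧
  Tendsto (fun k => (f^[k] [1]).length) atTop atTop ∧
  ∀ k n, n < (f^[k] [1]).length → (f^[k] [1]).getD n 0 = s n

/-! Since `f(w) = w` and `w` begins with `1`, the word `f(1)` is the prefix `12313` of `w`.
The prefix `w[0, 27) = ψ³(1)` ends with `1`, so `f(1)` occurs in `w` again at position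
`B = |f(w[0, 26))|`. The letters `1, 2, 3` occur `8, 9, 9` times in `w[0, 26)`, whence
`B = 8·5 + 9(|f(2)| + |f(3)|) ≡ 1 (mod 3)`. The letters `3, 1, 3` at positions
`B + 2, …, B + 4` then form one block `w[3q, 3q + 3)`, the `ψ`-image of a single letter; but every
such block is a permutation of `123`. -/

theorem List.getElem?_flatten_mul_add {α : Type*} {L : List (List α)} {n r : ℕ}
    (hL : ∀ x ∈ L, x.length = n) (hr : r < n) (q : ℕ) :
    L.flatten[n * q + r]? = L[q]?.bind (·[r]?) := by
  induction L generalizing q with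
  | nil => simp
  | cons x L ih =>
    have hx : x.length = n := hL x mem_cons_self
    rw [flatten_cons]
    rcases q with _ | q
    · simp [getElem?_append_left (hx ▸ hr : r < x.length)]
    · rw [show n * (q + 1) + r = x.length + (n * q + r) by rw [hx]; ring,
        getElem?_append_right (by omega), Nat.add_sub_cancel_left,
        ih (fun y hy => hL y (mem_cons_of_mem x hy))]
      simp

theorem List.IsPrefix.getElem?_eq {α : Type*} {u v : List α} (h : u <+: v) {i : ℕ}
    (hi : i < u.length) : u[i]? = v[i]? := by
  rw [prefix_iff_getElem?.1 h i hi, getElem?_eq_getElem hi]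

def psiBlock (i a : ℕ) : List ℕ := if i % 2 = 0 then oddBlock a else evenBlock a

theorem psi_eq_flatten_mapIdx (l : List ℕ) : psi l = (l.mapIdx psiBlock).flatten := by
  rw [psi, mapIdx_eq_zipIdx_map, zipIdx_eq_zip_range', ← range_eq_range', ← zip_swap,
    List.map_map]
  rfl

theorem length_psiBlock {a : ℕ} (ha : a = 1 ∨ a = 2 ∨ a = 3) (i : ℕ) :
    (psiBlock i a).length = 3 := by
  rcases ha with rfl | rfl | rfl <;> unfold psiBlock <;> split <;> rfl

theorem length_of_mem_mapIdx_psiBlock {l : List ℕ} (hl : Word123 l) :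
    ∀ x ∈ l.mapIdx psiBlock, x.length = 3 := by
  simp only [mem_mapIdx]
  rintro _ ⟨i, hi, rfl⟩
  exact length_psiBlock (hl _ (getElem_mem hi)) i

theorem word123_psiBlock (i a : ℕ) : Word123 (psiBlock i a) := by
  unfold psiBlock oddBlock evenBlock Word123
  split <;> split <;> simp

theorem nodup_psiBlock (i a : ℕ) : (psiBlock i a).Nodup := by
  unfold psiBlock oddBlock evenBlock
  split <;> split <;> simp

theorem word123_psi (l : List ℕ) : Word123 (psi l) := by
  intro a ha
  simp only [psi_eq_flatten_mapIdx, mem_flatten, mem_mapIdx] at ha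
  obtain ⟨_, ⟨i, _, rfl⟩, ha⟩ := ha
  exact word123_psiBlock _ _ a ha

theorem length_psi {l : List ℕ} (hl : Word123 l) : (psi l).length = 3 * l.length := by
  rw [psi_eq_flatten_mapIdx, length_flatten,
    map_eq_replicate_iff.2 (length_of_mem_mapIdx_psiBlock hl), sum_replicate, length_mapIdx,
    smul_eq_mul, mul_comm]

theorem List.IsPrefix.psi {u v : List ℕ} (h : u <+: v) : psi u <+: psi v := by
  obtain ⟨t, rfl⟩ := h
  rw [psi_eq_flatten_mapIdx, psi_eq_flatten_mapIdx, mapIdx_append, flatten_append]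
  exact prefix_append _ _

theorem getElem?_psi {l : List ℕ} (hl : Word123 l) (q : ℕ) {r : ℕ} (hr : r < 3) :
    (psi l)[3 * q + r]? = l[q]?.bind fun a => (psiBlock q a)[r]? := by
  rw [psi_eq_flatten_mapIdx, getElem?_flatten_mul_add (length_of_mem_mapIdx_psiBlock hl) hr,
    getElem?_mapIdx, Option.bind_map]
  rfl

theorem word123_psi_iterate (k : ℕ) : Word123 (psi^[k] [1]) := by
  cases k with
  | zero => simp [Word123]
  | succ k => rw [Function.iterate_succ_apply']; exact word123_psi _

theorem length_psi_iterate (k : ℕ) : (psi^[k] [1]).length = 3 ^ k := by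
  induction k with
  | zero => rfl
  | succ k ih =>
    rw [Function.iterate_succ_apply', length_psi (word123_psi_iterate k), ih, pow_succ']

theorem psi_iterate_prefix_succ (k : ℕ) : psi^[k] [1] <+: psi^[k + 1] [1] := by
  induction k with
  | zero => exact ⟨[2, 3], rfl⟩
  | succ k ih =>
    rw [Function.iterate_succ_apply', Function.iterate_succ_apply' psi (k + 1)]
    exact ih.psi

theorem psi_iterate_prefix {m k : ℕ} (h : m ≤ k) : psi^[m] [1] <+: psi^[k] [1] := by
  induction k, h using Nat.le_induction with
  | base => exact prefix_refl _
  | succ k _ ih => exact ih.trans (psi_iterate_prefix_succ k)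

theorem getElem?_psi_iterate_eq {m k n : ℕ} (hm : n < 3 ^ m) (hk : n < 3 ^ k) :
    (psi^[m] [1])[n]? = (psi^[k] [1])[n]? := by
  wlog h : m ≤ k generalizing m k
  · exact (this hk hm (by omega)).symm
  exact (psi_iterate_prefix h).getElem?_eq (by rwa [length_psi_iterate])

theorem getElem?_psi_iterate {k n : ℕ} (hn : n < 3 ^ k) :
    (psi^[k] [1])[n]? = some (arshon n) := by
  have hn' : n < 3 ^ (n + 1) := (Nat.lt_succ_self n).trans (Nat.lt_pow_self (by norm_num))
  rw [getElem?_psi_iterate_eq hn hn', arshon, getD_eq_getElem?_getD,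
    getElem?_eq_getElem (by rwa [length_psi_iterate])]
  rfl

theorem map_range_arshon (k : ℕ) : (range (3 ^ k)).map arshon = psi^[k] [1] := by
  refine ext_getElem? fun n => ?_
  rcases lt_or_ge n (3 ^ k) with hn | hn
  · rw [getElem?_psi_iterate hn]; simp [hn]
  · rw [getElem?_eq_none (by simpa using hn),
      getElem?_eq_none (by simpa [length_psi_iterate] using hn)]

theorem getElem?_psiBlock_arshon (q : ℕ) {r : ℕ} (hr : r < 3) :
    (psiBlock q (arshon q))[r]? = some (arshon (3 * q + r)) := by
  have hq : q < 3 ^ (q + 1) := (Nat.lt_succ_self q).trans (Nat.lt_pow_self (by norm_num))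
  have hqr : 3 * q + r < 3 ^ (q + 2) := by rw [pow_succ' 3 (q + 1)]; omega
  rw [← getElem?_psi_iterate hqr, Function.iterate_succ_apply',
    getElem?_psi (word123_psi_iterate _) q hr, getElem?_psi_iterate hq, Option.bind_some]

theorem arshon_three_mul_ne (q : ℕ) : arshon (3 * q) ≠ arshon (3 * q + 2) := by
  intro h
  have h0 := getElem?_psiBlock_arshon q (r := 0) (by norm_num)
  have h2 := getElem?_psiBlock_arshon q (r := 2) (by norm_num)
  rw [add_zero, h, ← h2] at h0
  obtain ⟨hlen, -⟩ := List.getElem?_eq_some_iff.1 h2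
  exact absurd ((getElem?_inj (by omega) (nodup_psiBlock _ _)).1 h0) (by norm_num)

theorem arshon_prefix_27 :
    (range 27).map arshon = [1,2,3,1,3,2,3,1,2,3,2,1,3,1,2,1,3,2,3,1,2,3,2,1,2,3,1] :=
  (map_range_arshon 3).trans (by decide)

theorem apply_nil_of_map_append {f : List ℕ → List ℕ}
    (hf : ∀ u v, f (u ++ v) = f u ++ f v) : f [] = [] := by
  simpa using hf [] []

theorem length_apply_eq_sum_of_map_append {f : List ℕ → List ℕ}
    (hf : ∀ u v, f (u ++ v) = f u ++ f v) (l : List ℕ) :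
    (f l).length = (l.map fun a => (f [a]).length).sum := by
  induction l with
  | nil => simp [apply_nil_of_map_append hf]
  | cons a l ih => rw [← singleton_append, hf, length_append, ih]; simp

theorem getElem_apply_singleton_of_fixesArshon {f : List ℕ → List ℕ}
    (hf : ∀ u v, f (u ++ v) = f u ++ f v) (hfix : FixesArshon f) {n a : ℕ}
    (hn : arshon n = a) (j : ℕ) (hj : j < (f [a]).length) :
    (f [a])[j] = arshon ((f ((range n).map arshon)).length + j) := by
  have h := congrArg (·[(f ((range n).map arshon)).length + j]?) (hfix.1 (n + 1))
  simp only [range_succ, map_append, map_singleton, hn, hf] at h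
  rw [getElem?_append_right (by omega), Nat.add_sub_cancel_left, getElem?_eq_getElem hj,
    getElem?_map, getElem?_range (by rw [length_append]; omega), Option.map_some] at h
  exact Option.some_injective _ h

/-- There is no morphism `f` with `f(w) = w`, `|f(1)|+|f(2)|+|f(3)| > 3`
and `|f(1)| = 5`. -/
theorem arshon_no_fixing_morphism_length_eq_5 :
    ¬ ∃ f : List ℕ → List ℕ, IsMorphism123 f ∧ FixesArshon f ∧
      (f [1]).length + (f [2]).length + (f [3]).length > 3 ∧
      (f [1]).length = 5 := by
  rintro ⟨f, ⟨hf, -⟩, hfix, -, h5⟩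
  have hw := arshon_prefix_27
  have h0 : arshon 0 = 1 := by simpa using getElem_of_eq hw (i := 0) (by simp)
  have h2 : arshon 2 = 3 := by simpa using getElem_of_eq hw (i := 2) (by simp)
  have h4 : arshon 4 = 3 := by simpa using getElem_of_eq hw (i := 4) (by simp)
  have h26 : arshon 26 = 1 := by simpa using getElem_of_eq hw (i := 26) (by simp)
  set B := (f ((range 26).map arshon)).length with hB
  have hB3 : B % 3 = 1 := by
    rw [hB, length_apply_eq_sum_of_map_append hf, show range 26 = (range 27).take 26 by simp,
      map_take, hw]
    simp only [take_succ_cons, take_zero, map_cons, h5, map_nil, sum_cons, sum_nil, add_zero]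
    omega
  have e0 := getElem_apply_singleton_of_fixesArshon hf hfix h0
  have e26 := getElem_apply_singleton_of_fixesArshon hf hfix h26
  simp only [range_zero, map_nil, apply_nil_of_map_append hf, length_nil, zero_add] at e0
  apply arshon_three_mul_ne (B / 3 + 1)
  rw [show 3 * (B / 3 + 1) = B + 2 by omega, add_assoc, ← e26 2 (by omega), ← e26 4 (by omega),
    e0 2 (by omega), e0 4 (by omega), h2, h4]
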